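/- arXiv:2005.13445 — 5 statements merged into one kernel-verified Lean document; each statement's English description precedes it below -/
import Mathlib

section
/- Let f be convex and differentiable on [a,b]. For every x ∈ [a,b], the difference between the secant and the function satisfies s(x) - f(x) ≤ (b-a)·(f'(b) - f'(a))/4, where s is the secant through (a,f(a)) and (b,f(b)). -/
/-!
With `m` the slope of the secant, the tangent lines at `a` and `b` lie below `f`, so at
`x = a + u = b - v` the gap `s x - f x` is at most both `(m - f'(a)) u` and `(f'(b) - m) v`.
Both factors are nonnegative by convexity, and the smaller of two such products is at most
`(f'(b) - f'(a)) (b - a) / 4`.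
-/

theorem min_mul_le_add_mul_add_div_four {p q u v : ℝ} (hp : 0 ≤ p) (hq : 0 ≤ q)
    (hu : 0 ≤ u) (hv : 0 ≤ v) : min (p * u) (q * v) ≤ (p + q) * (u + v) / 4 := by
  -- `(u + v) * min ≤ v * (p * u) + u * (q * v) = (p + q) * u * v ≤ (p + q) * (u + v) ^ 2 / 4`
  rcases le_total (p * u) (q * v) with h | h
  · rw [min_eq_left h]
    nlinarith [mul_nonneg hp hu, mul_nonneg hq hv, mul_nonneg hp hv, mul_nonneg hq hu,
      mul_nonneg (add_nonneg hp hq) (sq_nonneg (u - v))]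
  · rw [min_eq_right h]
    nlinarith [mul_nonneg hp hu, mul_nonneg hq hv, mul_nonneg hp hv, mul_nonneg hq hu,
      mul_nonneg (add_nonneg hp hq) (sq_nonneg (u - v))]

theorem ConvexOn.add_mul_sub_le_of_hasDerivAt {S : Set ℝ} {f : ℝ → ℝ} {x y f' : ℝ}
    (hfc : ConvexOn ℝ S f) (hx : x ∈ S) (hy : y ∈ S) (hf : HasDerivAt f f' x) :
    f x + f' * (y - x) ≤ f y := by
  rcases lt_trichotomy x y with hxy | rfl | hyx
  · have h := hfc.le_slope_of_hasDerivAt hx hy hxy hf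
    rw [slope_def_field, le_div_iff₀ (sub_pos.2 hxy)] at h
    linarith
  · simp
  · have h := hfc.slope_le_of_hasDerivAt hy hx hyx hf
    rw [slope_def_field, div_le_iff₀ (sub_pos.2 hyx)] at h
    linarith

theorem secant_minus_function_bound_general
    (f : ℝ → ℝ) (a b fa' fb' : ℝ) (hab : a < b)
    (hconv : ConvexOn ℝ (Set.Icc a b) f)
    (hfa : HasDerivAt f fa' a) (hfb : HasDerivAt f fb' b) :
    ∀ x ∈ Set.Icc a b,
      (f a + ((f b - f a) / (b - a)) * (x - a)) - f x ≤
        (b - a) * (fb' - fa') / 4 := by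
  intro x hx
  have ha : a ∈ Set.Icc a b := Set.left_mem_Icc.2 hab.le
  have hb : b ∈ Set.Icc a b := Set.right_mem_Icc.2 hab.le
  rw [← slope_def_field]
  set m := slope f a b with hm
  have hfa_le : fa' ≤ m := hconv.le_slope_of_hasDerivAt ha hb hab hfa
  have hle_fb : m ≤ fb' := hconv.slope_le_of_hasDerivAt ha hb hab hfb
  have hfb_eq : f b = f a + m * (b - a) := by
    rw [hm, slope_def_field, div_mul_cancel₀ _ (sub_ne_zero.2 hab.ne')]; ring
  have hgap_left : f a + m * (x - a) - f x ≤ (m - fa') * (x - a) := by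
    linarith [hconv.add_mul_sub_le_of_hasDerivAt ha hx hfa]
  have hgap_right : f a + m * (x - a) - f x ≤ (fb' - m) * (b - x) := by
    linarith [hconv.add_mul_sub_le_of_hasDerivAt hb hx hfb]
  calc f a + m * (x - a) - f x ≤ min ((m - fa') * (x - a)) ((fb' - m) * (b - x)) :=
        le_min hgap_left hgap_right
    _ ≤ ((m - fa') + (fb' - m)) * ((x - a) + (b - x)) / 4 :=
        min_mul_le_add_mul_add_div_four (by linarith) (by linarith) (by linarith [hx.1])
          (by linarith [hx.2])
    _ = (b - a) * (fb' - fa') / 4 := by ring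

theorem secant_minus_function_bound
    (f : ℝ → ℝ) (a b fa' fb' : ℝ) (hab : a < b)
    (hconv : ConvexOn ℝ (Set.Icc a b) f)
    (hdiff : DifferentiableOn ℝ f (Set.Icc a b))
    (hfa : HasDerivAt f fa' a) (hfb : HasDerivAt f fb' b) :
    ∀ x ∈ Set.Icc a b,
      (f a + ((f b - f a) / (b - a)) * (x - a)) - f x ≤
        (b - a) * (fb' - fa') / 4 :=
  secant_minus_function_bound_general f a b fa' fb' hab hconv hfa hfb
end

section
/- Let f be convex and differentiable on [a,b] with f'(a) ≠ f'(b), and let T be the triangle with vertices v₁ = (a,f(a)), v₂ = (b,f(b)), and v₃ the intersection of the endpoint tangents. Then the convex hull of the graph {(x,f(x)) : x ∈ [a,b]} is contained in T, and conversely v₁, v₂ ∈ conv(graph), so the Hausdorff distance between T and conv(graph) is attained at the vertex v₃. -/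
open Metric

lemma convexOn_infDist_aux {E : Type*} [NormedAddCommGroup E] [NormedSpace ℝ E]
    {K : Set E} (hne : K.Nonempty) (hK : Convex ℝ K) :
    ConvexOn ℝ Set.univ (fun p => Metric.infDist p K) := by
  refine ⟨convex_univ, fun p _ q _ s t hs ht hst => ?_⟩
  simp only [smul_eq_mul]
  refine le_of_forall_pos_le_add fun ε hε => ?_
  obtain ⟨u, huK, hu⟩ := (Metric.infDist_lt_iff hne).1
    (show Metric.infDist p K < Metric.infDist p K + ε from lt_add_of_pos_right _ hε)
  obtain ⟨v, hvK, hv⟩ := (Metric.infDist_lt_iff hne).1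
    (show Metric.infDist q K < Metric.infDist q K + ε from lt_add_of_pos_right _ hε)
  have hw : s • u + t • v ∈ K := hK huK hvK hs ht hst
  calc Metric.infDist (s • p + t • q) K ≤ dist (s • p + t • q) (s • u + t • v) :=
        Metric.infDist_le_dist_of_mem hw
    _ ≤ s * dist p u + t * dist q v := by
        rw [dist_eq_norm, dist_eq_norm, dist_eq_norm]
        have h1 : s • p + t • q - (s • u + t • v) = s • (p - u) + t • (q - v) := by
          rw [smul_sub, smul_sub]; abel
        rw [h1]
        calc ‖s • (p - u) + t • (q - v)‖ ≤ ‖s • (p - u)‖ + ‖t • (q - v)‖ := norm_add_le _ _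
          _ = s * ‖p - u‖ + t * ‖q - v‖ := by
              rw [norm_smul, norm_smul, Real.norm_of_nonneg hs, Real.norm_of_nonneg ht]
    _ ≤ s * (Metric.infDist p K + ε) + t * (Metric.infDist q K + ε) :=
        add_le_add (mul_le_mul_of_nonneg_left hu.le hs) (mul_le_mul_of_nonneg_left hv.le ht)
    _ = s * Metric.infDist p K + t * Metric.infDist q K + ε := by linear_combination ε * hst

theorem hausdorff_attained_at_tangent_vertex
    (f : ℝ → ℝ) (a b fa' fb' : ℝ) (hab : a < b)
    (hconv : ConvexOn ℝ (Set.Icc a b) f)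
    (hdiff : DifferentiableOn ℝ f (Set.Icc a b))
    (hfa : HasDerivAt f fa' a) (hfb : HasDerivAt f fb' b)
    (hne : fa' ≠ fb') :
    let c := (f a - f b + fb' * b - fa' * a) / (fb' - fa')
    let v₁ : ℝ × ℝ := (a, f a)
    let v₂ : ℝ × ℝ := (b, f b)
    let v₃ : ℝ × ℝ := (c, f a + fa' * (c - a))
    let G := {p : ℝ × ℝ | p.1 ∈ Set.Icc a b ∧ p.2 = f p.1}
    let T := convexHull ℝ ({v₁, v₂, v₃} : Set (ℝ × ℝ))
    convexHull ℝ G ⊆ T ∧ v₁ ∈ convexHull ℝ G ∧ v₂ ∈ convexHull ℝ G ∧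
      Metric.hausdorffDist T (convexHull ℝ G) = Metric.infDist v₃ (convexHull ℝ G) := by
  intro c v₁ v₂ v₃ G T
  have ha : a ∈ Set.Icc a b := ⟨le_refl a, hab.le⟩
  have hb : b ∈ Set.Icc a b := ⟨hab.le, le_refl b⟩
  have hba : (0:ℝ) < b - a := by linarith
  -- endpoint derivative vs slope
  have h1 : fa' ≤ (f b - f a) / (b - a) := by
    have := hconv.le_slope_of_hasDerivAt ha hb hab hfa
    rwa [slope_def_field] at this
  have h2 : (f b - f a) / (b - a) ≤ fb' := by
    have := hconv.slope_le_of_hasDerivAt ha hb hab hfb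
    rwa [slope_def_field] at this
  have hlt : fa' < fb' := lt_of_le_of_ne (h1.trans h2) hne
  have hd : (0:ℝ) < fb' - fa' := by linarith
  -- slope multiplied out
  have h1' : fa' * (b - a) ≤ f b - f a := by
    rw [le_div_iff₀ hba] at h1; linarith
  have h2' : f b - f a ≤ fb' * (b - a) := by
    rw [div_le_iff₀ hba] at h2; linarith
  -- location of c
  have hc : c = (f a - f b + fb' * b - fa' * a) / (fb' - fa') := rfl
  have hca : a ≤ c := by
    rw [hc, le_div_iff₀ hd]; linarith [h2']
  have hcb : c ≤ b := by
    rw [hc, div_le_iff₀ hd]; linarith [h1']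
  -- tangent lines meet at c
  have hmeet : f a + fa' * (c - a) = f b + fb' * (c - b) := by
    rw [hc]; field_simp; ring
  -- tangent line inequalities
  have htan_a : ∀ x ∈ Set.Icc a b, f a + fa' * (x - a) ≤ f x := by
    intro x hx
    rcases eq_or_lt_of_le hx.1 with h | h
    · rw [← h]; simp
    · have := hconv.le_slope_of_hasDerivAt ha hx h hfa
      rw [slope_def_field, le_div_iff₀ (by linarith)] at this
      linarith
  have htan_b : ∀ x ∈ Set.Icc a b, f b + fb' * (x - b) ≤ f x := by
    intro x hx
    rcases eq_or_lt_of_le hx.2 with h | h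
    · rw [h]; simp
    · have := hconv.slope_le_of_hasDerivAt hx hb h hfb
      rw [slope_def_field, div_le_iff₀ (by linarith)] at this
      linarith
  -- secant inequality
  have hsec : ∀ x ∈ Set.Icc a b, f x ≤ f a + (f b - f a) / (b - a) * (x - a) := by
    intro x hx
    set t := (x - a) / (b - a) with htdef
    have ht0 : 0 ≤ t := div_nonneg (by linarith [hx.1]) hba.le
    have ht1 : t ≤ 1 := by rw [htdef, div_le_one hba]; linarith [hx.2]
    have htba : t * (b - a) = x - a := div_mul_cancel₀ _ hba.ne'
    have hx_eq : (1 - t) • a + t • b = x := by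
      simp only [smul_eq_mul]; linear_combination htba
    have := hconv.2 ha hb (by linarith : (0:ℝ) ≤ 1 - t) ht0 (by ring)
    rw [hx_eq] at this
    simp only [smul_eq_mul] at this
    have hrhs : (1 - t) * f a + t * f b = f a + (f b - f a) / (b - a) * (x - a) := by
      rw [htdef]; field_simp; ring
    linarith [this, hrhs.le]
  -- triangle stuff
  have hv₁T : v₁ ∈ T := subset_convexHull ℝ _ (by simp [T])
  have hv₂T : v₂ ∈ T := subset_convexHull ℝ _ (by simp [T])
  have hv₃T : v₃ ∈ T := subset_convexHull ℝ _ (by simp [T])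
  have hTconv : Convex ℝ T := convex_convexHull ℝ _
  -- graph is inside the triangle
  have hGT : G ⊆ T := by
    rintro ⟨x, y⟩ ⟨hx, hy⟩
    simp only at hx hy
    subst hy
    -- top point on the secant
    set u := (x - a) / (b - a) with hudef
    have hu0 : 0 ≤ u := div_nonneg (by linarith [hx.1]) hba.le
    have hu1 : u ≤ 1 := by rw [hudef, div_le_one hba]; linarith [hx.2]
    have huba : u * (b - a) = x - a := div_mul_cancel₀ _ hba.ne'
    have htopT : ((x, f a + (f b - f a) / (b - a) * (x - a)) : ℝ × ℝ) ∈ T := by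
      have : ((x, f a + (f b - f a) / (b - a) * (x - a)) : ℝ × ℝ)
          = (1 - u) • v₁ + u • v₂ := by
        apply Prod.ext
        · simp only [Prod.fst_add, Prod.smul_fst, smul_eq_mul]
          show x = (1 - u) * a + u * b; linear_combination -huba
        · simp only [Prod.snd_add, Prod.smul_snd, smul_eq_mul]
          show f a + (f b - f a) / (b - a) * (x - a) = (1 - u) * f a + u * f b
          rw [hudef]; field_simp; ring
      rw [this]
      exact hTconv hv₁T hv₂T (by linarith) hu0 (by ring)
    -- bottom point on a tangent edge
    have hbotT : ∃ yb : ℝ, yb ≤ f x ∧ ((x, yb) : ℝ × ℝ) ∈ T := by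
      rcases le_total x c with hxc | hcx
      · refine ⟨f a + fa' * (x - a), htan_a x hx, ?_⟩
        rcases eq_or_lt_of_le hca with hac | hac
        · have hxa : x = a := le_antisymm (by rw [hac]; exact hxc) hx.1
          have : ((x, f a + fa' * (x - a)) : ℝ × ℝ) = v₁ := by
            apply Prod.ext <;> simp [hxa, v₁]
          rw [this]; exact hv₁T
        · set w := (x - a) / (c - a) with hwdef
          have hcapos : (0:ℝ) < c - a := by linarith
          have hw0 : 0 ≤ w := div_nonneg (by linarith [hx.1]) hcapos.le
          have hw1 : w ≤ 1 := by rw [hwdef, div_le_one hcapos]; linarith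
          have hwca : w * (c - a) = x - a := div_mul_cancel₀ _ hcapos.ne'
          have heq : ((x, f a + fa' * (x - a)) : ℝ × ℝ) = (1 - w) • v₁ + w • v₃ := by
            apply Prod.ext
            · simp only [Prod.fst_add, Prod.smul_fst, smul_eq_mul]
              show x = (1 - w) * a + w * c; linear_combination -hwca
            · simp only [Prod.snd_add, Prod.smul_snd, smul_eq_mul]
              show f a + fa' * (x - a) = (1 - w) * f a + w * (f a + fa' * (c - a))
              linear_combination (-fa') * hwca
          rw [heq]
          exact hTconv hv₁T hv₃T (by linarith) hw0 (by ring)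
      · refine ⟨f b + fb' * (x - b), htan_b x hx, ?_⟩
        rcases eq_or_lt_of_le hcb with hbc | hbc
        · have hxb : x = b := le_antisymm hx.2 (by rw [← hbc]; exact hcx)
          have : ((x, f b + fb' * (x - b)) : ℝ × ℝ) = v₂ := by
            apply Prod.ext <;> simp [hxb, v₂]
          rw [this]; exact hv₂T
        · set w := (x - c) / (b - c) with hwdef
          have hbcpos : (0:ℝ) < b - c := by linarith
          have hw0 : 0 ≤ w := div_nonneg (by linarith) hbcpos.le
          have hw1 : w ≤ 1 := by rw [hwdef, div_le_one hbcpos]; linarith [hx.2]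
          have hwbc : w * (b - c) = x - c := div_mul_cancel₀ _ hbcpos.ne'
          have heq : ((x, f b + fb' * (x - b)) : ℝ × ℝ) = (1 - w) • v₃ + w • v₂ := by
            apply Prod.ext
            · simp only [Prod.fst_add, Prod.smul_fst, smul_eq_mul]
              show x = (1 - w) * c + w * b; linear_combination -hwbc
            · simp only [Prod.snd_add, Prod.smul_snd, smul_eq_mul]
              show f b + fb' * (x - b) = (1 - w) * (f a + fa' * (c - a)) + w * f b
              rw [hmeet]; linear_combination (-fb') * hwbc
          rw [heq]
          exact hTconv hv₃T hv₂T (by linarith) hw0 (by ring)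
    obtain ⟨yb, hyb, hybT⟩ := hbotT
    have hfx_top : f x ≤ f a + (f b - f a) / (b - a) * (x - a) := hsec x hx
    have hmem : f x ∈ segment ℝ yb (f a + (f b - f a) / (b - a) * (x - a)) := by
      rw [segment_eq_Icc (hyb.trans hfx_top)]
      exact ⟨hyb, hfx_top⟩
    obtain ⟨s, t, hs, ht, hst, heq⟩ := hmem
    have : ((x, f x) : ℝ × ℝ)
        = s • ((x, yb) : ℝ × ℝ) + t • ((x, f a + (f b - f a) / (b - a) * (x - a)) : ℝ × ℝ) := by
      apply Prod.ext
      · simp only [Prod.fst_add, Prod.smul_fst, smul_eq_mul]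
        show x = s * x + t * x; linear_combination (-x) * hst
      · simp only [Prod.snd_add, Prod.smul_snd]
        exact heq.symm
    rw [this]
    exact hTconv hybT htopT hs ht hst
  -- the four conclusions
  have hKT : convexHull ℝ G ⊆ T := convexHull_min hGT hTconv
  have hv₁G : v₁ ∈ convexHull ℝ G := subset_convexHull ℝ G ⟨ha, rfl⟩
  have hv₂G : v₂ ∈ convexHull ℝ G := subset_convexHull ℝ G ⟨hb, rfl⟩
  refine ⟨hKT, hv₁G, hv₂G, ?_⟩
  set K := convexHull ℝ G with hKdef
  have hKne : K.Nonempty := ⟨v₁, hv₁G⟩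
  have hTne : T.Nonempty := ⟨v₁, hv₁T⟩
  have hTbdd : Bornology.IsBounded T := by
    rw [isBounded_convexHull]
    exact (Set.toFinite _).isBounded
  have hKbdd : Bornology.IsBounded K := hTbdd.subset hKT
  have hedist : EMetric.hausdorffEdist T K ≠ ⊤ :=
    Metric.hausdorffEdist_ne_top_of_nonempty_of_bounded hTne hKne hTbdd hKbdd
  have hKconv : Convex ℝ K := convex_convexHull ℝ G
  apply le_antisymm
  · apply Metric.hausdorffDist_le_of_infDist Metric.infDist_nonneg
    · intro x hxT
      obtain ⟨y, hy, hle⟩ := (convexOn_infDist_aux hKne hKconv).exists_ge_of_mem_convexHull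
        (Set.subset_univ _) hxT
      simp only [Set.mem_insert_iff, Set.mem_singleton_iff] at hy
      rcases hy with rfl | rfl | rfl
      · calc Metric.infDist x K ≤ Metric.infDist v₁ K := hle
          _ = 0 := Metric.infDist_zero_of_mem hv₁G
          _ ≤ Metric.infDist v₃ K := Metric.infDist_nonneg
      · calc Metric.infDist x K ≤ Metric.infDist v₂ K := hle
          _ = 0 := Metric.infDist_zero_of_mem hv₂G
          _ ≤ Metric.infDist v₃ K := Metric.infDist_nonneg
      · exact hle
    · intro y hyK
      rw [Metric.infDist_zero_of_mem (hKT hyK)]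
      exact Metric.infDist_nonneg
  · exact Metric.infDist_le_hausdorffDist_of_mem hv₃T hedist
end

section
/- Let A be a polytope (compact convex set with finitely many extreme points) in ℝⁿ and B a nonempty closed convex subset of A. Then there exists an extreme point v of A such that the Hausdorff distance d_H(A,B) equals the distance from v to B, i.e., d_H(A,B) = inf_{b ∈ B} ‖v - b‖. -/
/-! The distance to a convex set is a convex function, so on the polytope `A` its maximum is
attained at an extreme point; since `B ⊆ A`, that maximum is the Hausdorff distance. -/

open Bornology Metric Set

theorem Convex.convexOn_infDist {E : Type*} [SeminormedAddCommGroup E] [NormedSpace ℝ E]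
    {B : Set E} (hB : Convex ℝ B) : ConvexOn ℝ univ (infDist · B) := by
  rcases B.eq_empty_or_nonempty with rfl | hBne
  · simpa only [infDist_empty] using convexOn_const (0 : ℝ) convex_univ
  refine ⟨convex_univ, fun x _ y _ a b ha hb hab => ?_⟩
  simp only [smul_eq_mul]
  refine le_of_forall_pos_le_add fun ε hε => ?_
  obtain ⟨p, hp, hpx⟩ := (infDist_lt_iff hBne).mp (lt_add_of_pos_right (infDist x B) hε)
  obtain ⟨q, hq, hqy⟩ := (infDist_lt_iff hBne).mp (lt_add_of_pos_right (infDist y B) hε)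
  calc infDist (a • x + b • y) B ≤ dist (a • x + b • y) (a • p + b • q) :=
        infDist_le_dist_of_mem (hB hp hq ha hb hab)
    _ ≤ a * dist x p + b * dist y q := dist_add_add_le_of_le
        (by rw [dist_smul₀, Real.norm_of_nonneg ha]) (by rw [dist_smul₀, Real.norm_of_nonneg hb])
    _ ≤ a * (infDist x B + ε) + b * (infDist y B + ε) := by gcongr
    _ = a * infDist x B + b * infDist y B + ε := by linear_combination ε * hab

section LocallyConvex

variable {E : Type*} [AddCommGroup E] [Module ℝ E] [TopologicalSpace E] [T2Space E]
  [IsTopologicalAddGroup E] [ContinuousSMul ℝ E] [LocallyConvexSpace ℝ E] {A : Set E}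

theorem convexHull_extremePoints_eq_of_finite (hAc : IsCompact A) (hAconv : Convex ℝ A)
    (hfin : (A.extremePoints ℝ).Finite) : convexHull ℝ (A.extremePoints ℝ) = A := by
  -- Krein–Milman, where the closure is superfluous because the hull of a finite set is compact.
  simpa only [(hfin.isCompact_convexHull ℝ).isClosed.closure_eq] using
    closure_convexHull_extremePoints hAc hAconv

theorem ConvexOn.exists_isMaxOn_extremePoints {f : E → ℝ} (hf : ConvexOn ℝ A f)
    (hAc : IsCompact A) (hAne : A.Nonempty) (hfin : (A.extremePoints ℝ).Finite) :
    ∃ v ∈ A.extremePoints ℝ, IsMaxOn f A v := by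
  obtain ⟨v, hv, hvmax⟩ :=
    exists_max_image _ f hfin (hAc.extremePoints_nonempty hAne)
  refine ⟨v, hv, fun x hx => ?_⟩
  rw [← convexHull_extremePoints_eq_of_finite hAc hf.1 hfin] at hx
  obtain ⟨y, hy, hxy⟩ := hf.exists_ge_of_mem_convexHull extremePoints_subset hx
  exact hxy.trans (hvmax y hy)

end LocallyConvex

theorem Metric.hausdorffDist_eq_infDist_of_isMaxOn {X : Type*} [PseudoMetricSpace X]
    {A B : Set X} {v : X} (hBA : B ⊆ A) (hBne : B.Nonempty) (hA : IsBounded A) (hv : v ∈ A)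
    (hmax : IsMaxOn (infDist · B) A v) : hausdorffDist A B = infDist v B := by
  refine le_antisymm (hausdorffDist_le_of_infDist infDist_nonneg hmax fun y hy => ?_)
    (infDist_le_hausdorffDist_of_mem hv
      (hausdorffEDist_ne_top_of_nonempty_of_bounded (hBne.mono hBA) hBne hA (hA.subset hBA)))
  rw [infDist_zero_of_mem (hBA hy)]
  exact infDist_nonneg

theorem hausdorff_dist_attained_at_extreme_point_general
    (n : ℕ) (S : Set (EuclideanSpace ℝ (Fin n))) (hS : S.Finite)
    (A B : Set (EuclideanSpace ℝ (Fin n)))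
    (hA : A = convexHull ℝ S)
    (hBne : B.Nonempty) (hBconv : Convex ℝ B)
    (hBA : B ⊆ A) :
    ∃ v ∈ Set.extremePoints ℝ A,
      Metric.hausdorffDist A B = Metric.infDist v B := by
  subst hA
  have hAc : IsCompact (convexHull ℝ S) := hS.isCompact_convexHull ℝ
  obtain ⟨v, hv, hvmax⟩ := (hBconv.convexOn_infDist.subset (subset_univ _)
    (convex_convexHull ℝ S)).exists_isMaxOn_extremePoints hAc (hBne.mono hBA)
    (hS.subset extremePoints_convexHull_subset)
  exact ⟨v, hv, hausdorffDist_eq_infDist_of_isMaxOn hBA hBne hAc.isBounded hv.1 hvmax⟩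

theorem hausdorff_dist_attained_at_extreme_point
    (n : ℕ) (S : Set (EuclideanSpace ℝ (Fin n))) (hS : S.Finite)
    (A B : Set (EuclideanSpace ℝ (Fin n)))
    (hA : A = convexHull ℝ S)
    (hBne : B.Nonempty) (hBclosed : IsClosed B) (hBconv : Convex ℝ B)
    (hBA : B ⊆ A) :
    ∃ v ∈ Set.extremePoints ℝ A,
      Metric.hausdorffDist A B = Metric.infDist v B :=
  hausdorff_dist_attained_at_extreme_point_general n S hS A B hA hBne hBconv hBA
end

section
/- Let f be convex and differentiable on [a,b], let m ∈ (a,b), and let T be the triangle for [a,b] (vertices (a,f(a)), (b,f(b)) and the intersection of the tangents at a and b), and T₁, T₂ the triangles for [a,m] and [m,b] respectively. Then T₁ ∪ T₂ ⊆ T, i.e., refining the partition produces a smaller relaxation. -/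
/-!
The apex `Q₁` of the triangle for `[a, m]` lies on the tangent at `a` between `(a, f a)` and the
apex `Q` for `[a, b]`, and symmetrically the apex `Q₂` for `[m, b]` lies on the tangent at `b`
between `Q` and `(b, f b)`; both are therefore in the big triangle. Finally `(m, f m)` lies on the
tangent at `m`, between `Q₁` and `Q₂`. All these betweenness claims are orderings of abscissae of
intersections of lines, which follow from the tangent inequalities of the convex function.
-/

open Set

theorem AffineMap.mk_mem_segment {𝕜 E : Type*} [Field 𝕜] [LinearOrder 𝕜] [IsStrictOrderedRing 𝕜]
    [AddCommGroup E] [Module 𝕜 E] (g : 𝕜 →ᵃ[𝕜] E) {x₁ x x₂ : 𝕜} (h₁ : x₁ ≤ x) (h₂ : x ≤ x₂) :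
    (x, g x) ∈ segment 𝕜 (x₁, g x₁) (x₂, g x₂) := by
  have hx : x ∈ segment 𝕜 x₁ x₂ := by rw [segment_eq_Icc (h₁.trans h₂)]; exact ⟨h₁, h₂⟩
  exact image_segment 𝕜 ((AffineMap.id 𝕜 𝕜).prod g) x₁ x₂ ▸ mem_image_of_mem _ hx

section Tangents

variable (f f' : ℝ → ℝ)

noncomputable def tangentLine (u : ℝ) : ℝ →ᵃ[ℝ] ℝ :=
  (LinearMap.lsmul ℝ ℝ (f' u)).toAffineMap + AffineMap.const ℝ ℝ (f u - f' u * u)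

@[simp]
theorem tangentLine_apply (u x : ℝ) : tangentLine f f' u x = f u + f' u * (x - u) := by
  simp [tangentLine]
  ring

theorem tangentLine_apply_self (u : ℝ) : tangentLine f f' u u = f u := by
  simp

noncomputable def tangentMeet (u v : ℝ) : ℝ :=
  (f u - f v + f' v * v - f' u * u) / (f' v - f' u)

variable {f f'}

theorem tangentLine_sub_tangentLine {u v : ℝ} (h : f' u ≠ f' v) (x : ℝ) :
    tangentLine f f' u x - tangentLine f f' v x = (f' v - f' u) * (tangentMeet f f' u v - x) := by
  have : f' v - f' u ≠ 0 := sub_ne_zero.2 h.symm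
  simp only [tangentLine_apply, tangentMeet]
  field_simp
  ring

theorem tangentLine_tangentMeet {u v : ℝ} (h : f' u ≠ f' v) :
    tangentLine f f' u (tangentMeet f f' u v) = tangentLine f f' v (tangentMeet f f' u v) := by
  rw [← sub_eq_zero, tangentLine_sub_tangentLine h, sub_self, mul_zero]

theorem tangentLine_le_tangentLine_iff_le_tangentMeet {u v x : ℝ} (h : f' u < f' v) :
    tangentLine f f' v x ≤ tangentLine f f' u x ↔ x ≤ tangentMeet f f' u v := by
  rw [← sub_nonneg, tangentLine_sub_tangentLine h.ne, mul_nonneg_iff_of_pos_left (sub_pos.2 h),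
    sub_nonneg]

theorem tangentLine_le_tangentLine_iff_tangentMeet_le {u v x : ℝ} (h : f' u < f' v) :
    tangentLine f f' u x ≤ tangentLine f f' v x ↔ tangentMeet f f' u v ≤ x := by
  rw [← sub_nonneg, ← neg_sub, tangentLine_sub_tangentLine h.ne, ← mul_neg,
    mul_nonneg_iff_of_pos_left (sub_pos.2 h), neg_sub, sub_nonneg]

theorem ConvexOn.tangentLine_le {S : Set ℝ} (hf : ConvexOn ℝ S f) {x z : ℝ} (hx : x ∈ S)
    (hz : z ∈ S) (hd : HasDerivAt f (f' x) x) : tangentLine f f' x z ≤ f z := by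
  rw [tangentLine_apply, ← le_sub_iff_add_le']
  rcases lt_trichotomy x z with hxz | rfl | hzx
  · have := hf.le_slope_of_hasDerivAt hx hz hxz hd
    rwa [slope_def_field, le_div_iff₀ (sub_pos.2 hxz)] at this
  · simp
  · have := hf.slope_le_of_hasDerivAt hz hx hzx hd
    rw [slope_def_field, div_le_iff₀ (sub_pos.2 hzx)] at this
    rwa [← neg_sub x z, ← neg_sub (f x), mul_neg, neg_le_neg_iff]

theorem le_tangentMeet {u v : ℝ} (h : f' u < f' v) (hv : tangentLine f f' v u ≤ f u) :
    u ≤ tangentMeet f f' u v :=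
  (tangentLine_le_tangentLine_iff_le_tangentMeet h).1 (by rwa [tangentLine_apply_self])

theorem tangentMeet_le {u v : ℝ} (h : f' u < f' v) (hu : tangentLine f f' u v ≤ f v) :
    tangentMeet f f' u v ≤ v :=
  (tangentLine_le_tangentLine_iff_tangentMeet_le h).1 (by rwa [tangentLine_apply_self])

theorem tangentMeet_mem_Icc {a m b : ℝ} (ham : f' a < f' m) (hmb : f' m < f' b)
    (h : tangentMeet f f' a m ≤ tangentMeet f f' m b) :
    tangentMeet f f' a b ∈ Icc (tangentMeet f f' a m) (tangentMeet f f' m b) := by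
  constructor
  · rw [← tangentLine_le_tangentLine_iff_le_tangentMeet (ham.trans hmb),
      tangentLine_tangentMeet ham.ne]
    exact (tangentLine_le_tangentLine_iff_le_tangentMeet hmb).2 h
  · rw [← tangentLine_le_tangentLine_iff_tangentMeet_le (ham.trans hmb),
      ← tangentLine_tangentMeet hmb.ne]
    exact (tangentLine_le_tangentLine_iff_tangentMeet_le ham).2 h

variable (f f') in
noncomputable def tangentTriangle (u v : ℝ) : Set (ℝ × ℝ) :=
  convexHull ℝ
    {(u, f u), (v, f v), (tangentMeet f f' u v, f u + f' u * (tangentMeet f f' u v - u))}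

theorem tangentTriangle_union_subset {a m b : ℝ} (ham : f' a < f' m) (hmb : f' m < f' b)
    (ha_am : a ≤ tangentMeet f f' a m) (ham_m : tangentMeet f f' a m ≤ m)
    (hm_mb : m ≤ tangentMeet f f' m b) (hmb_b : tangentMeet f f' m b ≤ b) :
    tangentTriangle f f' a m ∪ tangentTriangle f f' m b ⊆ tangentTriangle f f' a b := by
  obtain ⟨ham_ab, hab_mb⟩ := tangentMeet_mem_Icc ham hmb (ham_m.trans hm_mb)
  set T := tangentTriangle f f' a b
  have hT : Convex ℝ T := convex_convexHull ℝ _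
  have hA : (a, tangentLine f f' a a) ∈ T := subset_convexHull ℝ _ (by simp)
  have hB : (b, tangentLine f f' b b) ∈ T := subset_convexHull ℝ _ (by simp)
  have hQ : (tangentMeet f f' a b, tangentLine f f' a (tangentMeet f f' a b)) ∈ T :=
    subset_convexHull ℝ _ (by simp)
  have hQ₁ : (tangentMeet f f' a m, tangentLine f f' a (tangentMeet f f' a m)) ∈ T :=
    hT.segment_subset hA hQ ((tangentLine f f' a).mk_mem_segment ha_am ham_ab)
  have hQ₂ : (tangentMeet f f' m b, tangentLine f f' m (tangentMeet f f' m b)) ∈ T := by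
    rw [tangentLine_tangentMeet (ham.trans hmb).ne] at hQ
    rw [tangentLine_tangentMeet hmb.ne]
    exact hT.segment_subset hQ hB ((tangentLine f f' b).mk_mem_segment hab_mb hmb_b)
  have hM : (m, tangentLine f f' m m) ∈ T := by
    rw [tangentLine_tangentMeet ham.ne] at hQ₁
    exact hT.segment_subset hQ₁ hQ₂ ((tangentLine f f' m).mk_mem_segment ham_m hm_mb)
  simp only [tangentLine_apply_self] at hA hB hM
  simp only [tangentLine_apply] at hQ₁ hQ₂
  refine union_subset (convexHull_min ?_ hT) (convexHull_min ?_ hT)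
  · exact insert_subset_iff.2 ⟨hA, insert_subset_iff.2 ⟨hM, singleton_subset_iff.2 hQ₁⟩⟩
  · exact insert_subset_iff.2 ⟨hM, insert_subset_iff.2 ⟨hB, singleton_subset_iff.2 hQ₂⟩⟩

end Tangents

theorem refined_triangles_subset
    (f f' : ℝ → ℝ) (a m b : ℝ) (ham : a < m) (hmb : m < b)
    (hconv : ConvexOn ℝ (Set.Icc a b) f)
    (hderiv : ∀ x ∈ Set.Icc a b, HasDerivAt f (f' x) x)
    (h1 : f' a < f' m) (h2 : f' m < f' b) :
    let c : ℝ → ℝ → ℝ := fun u v =>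
      (f u - f v + f' v * v - f' u * u) / (f' v - f' u)
    let tri : ℝ → ℝ → Set (ℝ × ℝ) := fun u v =>
      convexHull ℝ ({(u, f u), (v, f v), (c u v, f u + f' u * (c u v - u))} : Set (ℝ × ℝ))
    tri a m ∪ tri m b ⊆ tri a b := by
  intro c tri
  have ha : a ∈ Icc a b := left_mem_Icc.2 (ham.trans hmb).le
  have hm : m ∈ Icc a b := ⟨ham.le, hmb.le⟩
  have hb : b ∈ Icc a b := right_mem_Icc.2 (ham.trans hmb).le
  have tan {x z : ℝ} (hx : x ∈ Icc a b) (hz : z ∈ Icc a b) : tangentLine f f' x z ≤ f z :=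
    hconv.tangentLine_le hx hz (hderiv x hx)
  exact tangentTriangle_union_subset h1 h2 (le_tangentMeet h1 (tan hm ha))
    (tangentMeet_le h1 (tan ha hm)) (le_tangentMeet h2 (tan hb hm)) (tangentMeet_le h2 (tan hm hb))
end

section
/- Let f be convex and differentiable on [a,b] with f'(a) ≠ f'(b), and let c be the x-coordinate of the intersection of the endpoint tangents. Then the vertical gap at c between the secant and tangent envelope, s(c) - t(c), equals (c - a)(b - c)(f'(b) - f'(a))/(b - a), and this is the maximum of s(x) - t(x) over [a,b]. -/
theorem max_vertical_gap_at_tangent_intersection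
    (f : ℝ → ℝ) (a b fa' fb' : ℝ) (hab : a < b)
    (hconv : ConvexOn ℝ (Set.Icc a b) f)
    (hdiff : DifferentiableOn ℝ f (Set.Icc a b))
    (hfa : HasDerivAt f fa' a) (hfb : HasDerivAt f fb' b)
    (hlt : fa' < fb') :
    let c := (f a - f b + fb' * b - fa' * a) / (fb' - fa')
    let s : ℝ → ℝ := fun x => f a + ((f b - f a) / (b - a)) * (x - a)
    let t : ℝ → ℝ := fun x => max (f a + fa' * (x - a)) (f b + fb' * (x - b))
    s c - t c = (c - a) * (b - c) * (fb' - fa') / (b - a) ∧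
    ∀ x ∈ Set.Icc a b, s x - t x ≤ s c - t c := by
  intro c s t
  have hba : (0:ℝ) < b - a := by linarith
  have hd : fb' - fa' ≠ 0 := by linarith
  have ha : a ∈ Set.Icc a b := Set.left_mem_Icc.2 hab.le
  have hb : b ∈ Set.Icc a b := Set.right_mem_Icc.2 hab.le
  set m : ℝ := (f b - f a) / (b - a) with hm
  have hma : fa' ≤ m := by
    have := hconv.le_slope_of_hasDerivAt ha hb hab hfa
    rwa [slope_def_field] at this
  have hmb : m ≤ fb' := by
    have := hconv.slope_le_of_hasDerivAt ha hb hab hfb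
    rwa [slope_def_field] at this
  have hc : c * (fb' - fa') = f a - f b + fb' * b - fa' * a := by
    rw [show c = (f a - f b + fb' * b - fa' * a) / (fb' - fa') from rfl]
    field_simp
  have hmba : m * (b - a) = f b - f a := by rw [hm]; field_simp
  have hs : ∀ x, s x = f a + m * (x - a) := fun x => rfl
  have ht : ∀ x, t x = max (f a + fa' * (x - a)) (f b + fb' * (x - b)) := fun x => rfl
  clear_value c m
  clear_value s t
  -- tangent lines agree at c
  have hceq : f a + fa' * (c - a) = f b + fb' * (c - b) := by linarith [hc]
  have htc : t c = f a + fa' * (c - a) := by rw [ht, ← hceq, max_self]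
  -- key algebraic identities
  have hkey : (b - c) * (fb' - fa') = (m - fa') * (b - a) := by
    linear_combination -hc - hmba
  have hkey2 : (c - a) * (fb' - fa') = (fb' - m) * (b - a) := by
    linear_combination hc + hmba
  have hsc : s c - t c = (m - fa') * (c - a) := by rw [htc, hs]; ring
  have hsc' : s c - t c = (fb' - m) * (b - c) := by
    have h1 : (m - fa') * (c - a) * (fb' - fa') = (fb' - m) * (b - c) * (fb' - fa') := by
      linear_combination (m - fa') * hkey2 - (fb' - m) * hkey
    rw [hsc]
    exact mul_right_cancel₀ hd h1
  constructor
  · rw [hsc, eq_div_iff hba.ne']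
    linear_combination (a - c) * hkey
  · intro x hx
    obtain ⟨hax, hxb⟩ := hx
    rcases le_total x c with hxc | hcx
    · have h2 : s x - (f a + fa' * (x - a)) = (m - fa') * (x - a) := by rw [hs]; ring
      have h1 : s x - t x ≤ (m - fa') * (x - a) := by
        rw [← h2, ht]; exact sub_le_sub_left (le_max_left _ _) _
      rw [hsc]
      refine h1.trans ?_
      exact mul_le_mul_of_nonneg_left (by linarith) (by linarith)
    · have h2 : s x - (f b + fb' * (x - b)) = (fb' - m) * (b - x) := by
        rw [hs]; linear_combination hmba
      have h1 : s x - t x ≤ (fb' - m) * (b - x) := by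
        rw [← h2, ht]; exact sub_le_sub_left (le_max_right _ _) _
      rw [hsc']
      refine h1.trans ?_
      exact mul_le_mul_of_nonneg_left (by linarith) (by linarith)
end
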